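/- arXiv:2209.10814 — 3 statements merged into one kernel-verified Lean document; each statement's English description precedes it below -/
import Mathlib

section
/- For ADMM iterates (U^k, V^k, P^k) as in the context, ‖P^{k+1} − P^k‖ ≤ L_h ‖V^{k+1} − V^k‖ for every k ≥ 1. -/
open scoped RealInnerProductSpace
open Filter

/-- Matrix–vector product `H U` as a map between Euclidean spaces. -/
noncomputable def mvec {M N : ℕ} (H : Matrix (Fin N) (Fin M) ℝ)
    (U : EuclideanSpace ℝ (Fin M)) : EuclideanSpace ℝ (Fin N) :=
  (WithLp.equiv 2 (Fin N → ℝ)).symm (H.mulVec (WithLp.equiv 2 (Fin M → ℝ) U))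

/-- The augmented Lagrangian
`L(U,V,P) = f(U) + h(V) + ⟨P, V − HU⟩ + (ρ/2)‖V − HU‖²`. -/
noncomputable def lagr {M N : ℕ} (H : Matrix (Fin N) (Fin M) ℝ) (ρ : ℝ)
    (f : EuclideanSpace ℝ (Fin M) → ℝ) (h : EuclideanSpace ℝ (Fin N) → ℝ)
    (U : EuclideanSpace ℝ (Fin M)) (V P : EuclideanSpace ℝ (Fin N)) : ℝ :=
  f U + h V + ⟪P, V - mvec H U⟫ + (ρ / 2) * ‖V - mvec H U‖ ^ 2

/-- The box constraint set `K = {U : 0 ≤ Uᵢ ≤ 1 for all i}`. -/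
def Kbox (M : ℕ) : Set (EuclideanSpace ℝ (Fin M)) := {U | ∀ i, 0 ≤ U i ∧ U i ≤ 1}

/-!
The optimality condition of the `V`-step, `∇h(V^{k+1}) + P^k + ρ (V^{k+1} − H U^{k+1}) = 0`,
says precisely that the updated multiplier is `P^{k+1} = −∇h(V^{k+1})`. Hence for `k ≥ 1` both
`P^{k+1}` and `P^k` are negated gradients of `h`, and the Lipschitz bound on `∇h` applies.
-/

section Gradient

variable {E : Type*} [NormedAddCommGroup E] [InnerProductSpace ℝ E] [CompleteSpace E]
  {f g : E → ℝ} {a b x : E}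

theorem HasGradientAt.add (hf : HasGradientAt f a x) (hg : HasGradientAt g b x) :
    HasGradientAt (fun y => f y + g y) (a + b) x := by
  rw [hasGradientAt_iff_hasFDerivAt, map_add]
  exact hf.hasFDerivAt.add hg.hasFDerivAt

theorem IsLocalMin.hasGradientAt_eq_zero (hmin : IsLocalMin f x) (hf : HasGradientAt f a x) :
    a = 0 :=
  (map_eq_zero_iff _ (InnerProductSpace.toDual ℝ E).injective).mp
    (hmin.hasFDerivAt_eq_zero hf.hasFDerivAt)

theorem hasGradientAt_inner_sub_add_mul_norm_sub_sq (P c : E) (ρ : ℝ) (x : E) :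
    HasGradientAt (fun y => ⟪P, y - c⟫ + (ρ / 2) * ‖y - c‖ ^ 2) (P + ρ • (x - c)) x := by
  rw [hasGradientAt_iff_hasFDerivAt]
  have hlin : HasFDerivAt (fun y : E => ⟪P, y - c⟫) (innerSL ℝ P) x :=
    ((innerSL ℝ P).hasFDerivAt.sub_const ⟪P, c⟫).congr_of_eventuallyEq
      (Eventually.of_forall fun y => inner_sub_right P y c)
  have hsq := (((hasFDerivAt_id x).sub_const c).norm_sq).const_mul (ρ / 2)
  refine (hlin.add hsq).congr_fderiv (ContinuousLinearMap.ext fun y => ?_)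
  simp only [add_apply, smul_apply, ContinuousLinearMap.comp_apply,
    ContinuousLinearMap.id_apply, id_eq, innerSL_apply_apply,
    InnerProductSpace.toDual_apply_apply, inner_add_left, inner_smul_left, smul_eq_mul,
    two_smul, RCLike.conj_to_real]
  ring

end Gradient

theorem lagr_eq_add {M N : ℕ} (H : Matrix (Fin N) (Fin M) ℝ) (ρ : ℝ)
    (f : EuclideanSpace ℝ (Fin M) → ℝ) (h : EuclideanSpace ℝ (Fin N) → ℝ)
    (U : EuclideanSpace ℝ (Fin M)) (V P : EuclideanSpace ℝ (Fin N)) :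
    lagr H ρ f h U V P =
      f U + (h V + (⟪P, V - mvec H U⟫ + (ρ / 2) * ‖V - mvec H U‖ ^ 2)) := by
  simp only [lagr, add_assoc]

theorem multiplier_update_eq_neg_gradient_of_isMin {M N : ℕ} (H : Matrix (Fin N) (Fin M) ℝ)
    (ρ : ℝ) (f : EuclideanSpace ℝ (Fin M) → ℝ) (h : EuclideanSpace ℝ (Fin N) → ℝ)
    {U : EuclideanSpace ℝ (Fin M)} {V P : EuclideanSpace ℝ (Fin N)}
    (hdiff : DifferentiableAt ℝ h V) (hmin : ∀ V', lagr H ρ f h U V P ≤ lagr H ρ f h U V' P) :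
    P + ρ • (V - mvec H U) = -gradient h V := by
  have hloc : IsLocalMin
      (fun W => h W + (⟪P, W - mvec H U⟫ + (ρ / 2) * ‖W - mvec H U‖ ^ 2)) V :=
    Eventually.of_forall fun W => by
      simpa only [lagr_eq_add, add_le_add_iff_left] using hmin W
  have hzero := hloc.hasGradientAt_eq_zero
    (hdiff.hasGradientAt.add (hasGradientAt_inner_sub_add_mul_norm_sub_sq P _ ρ V))
  exact eq_neg_of_add_eq_zero_right hzero

theorem admm_multiplier_diff_bound_general
    {M N : ℕ} (H : Matrix (Fin N) (Fin M) ℝ) (ρ Lh : ℝ)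
    (f : EuclideanSpace ℝ (Fin M) → ℝ) (h : EuclideanSpace ℝ (Fin N) → ℝ)
    (hdiff : Differentiable ℝ h)
    (hlip : ∀ V W : EuclideanSpace ℝ (Fin N),
      ‖gradient h V - gradient h W‖ ≤ Lh * ‖V - W‖)
    (U : ℕ → EuclideanSpace ℝ (Fin M)) (V P : ℕ → EuclideanSpace ℝ (Fin N))
    (hVmin : ∀ k, ∀ V' : EuclideanSpace ℝ (Fin N),
      lagr H ρ f h (U (k+1)) (V (k+1)) (P k) ≤ lagr H ρ f h (U (k+1)) V' (P k))
    (hPup : ∀ k, P (k+1) = P k + ρ • (V (k+1) - mvec H (U (k+1))))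
    :
    ∀ k : ℕ, 1 ≤ k → ‖P (k+1) - P k‖ ≤ Lh * ‖V (k+1) - V k‖ := by
  have hP : ∀ j, P (j + 1) = -gradient h (V (j + 1)) := fun j =>
    (hPup j).trans
      (multiplier_update_eq_neg_gradient_of_isMin H ρ f h (hdiff _) (hVmin j))
  intro k hk
  obtain ⟨j, rfl⟩ := Nat.exists_eq_add_of_le' hk
  rw [hP, hP, neg_sub_neg, norm_sub_rev]
  exact hlip _ _

/-- For ADMM iterates, `‖P^{k+1} − P^k‖ ≤ L_h ‖V^{k+1} − V^k‖` for every `k ≥ 1`. -/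
theorem admm_multiplier_diff_bound
    {M N : ℕ} (H : Matrix (Fin N) (Fin M) ℝ) (ρ Lh : ℝ)
    (hρ : 0 < ρ) (hLh : 0 < Lh)
    (f : EuclideanSpace ℝ (Fin M) → ℝ) (h : EuclideanSpace ℝ (Fin N) → ℝ)
    (hdiff : Differentiable ℝ h)
    (hlip : ∀ V W : EuclideanSpace ℝ (Fin N),
      ‖gradient h V - gradient h W‖ ≤ Lh * ‖V - W‖)
    (U : ℕ → EuclideanSpace ℝ (Fin M)) (V P : ℕ → EuclideanSpace ℝ (Fin N))
    (hUK : ∀ k, U k ∈ Kbox M)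
    (hUmin : ∀ k, ∀ U' ∈ Kbox M,
      lagr H ρ f h (U (k+1)) (V k) (P k) ≤ lagr H ρ f h U' (V k) (P k))
    (hVmin : ∀ k, ∀ V' : EuclideanSpace ℝ (Fin N),
      lagr H ρ f h (U (k+1)) (V (k+1)) (P k) ≤ lagr H ρ f h (U (k+1)) V' (P k))
    (hPup : ∀ k, P (k+1) = P k + ρ • (V (k+1) - mvec H (U (k+1))))
    :
    ∀ k : ℕ, 1 ≤ k → ‖P (k+1) - P k‖ ≤ Lh * ‖V (k+1) - V k‖ :=
  admm_multiplier_diff_bound_general H ρ Lh f h hdiff hlip U V P hVmin hPup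
end

section
/- (Lemma 3.4, vanishing stationarity residual in U.) Assume ρ/2 − L_h/ρ − L_h > 0, f ≥ 0 and h ≥ 0. For ADMM iterates (U^k, V^k, P^k) as in the context, define d̄^k = Hᵀ(P^k − P^{k+1}) + ρ Hᵀ(V^k − V^{k+1}) ∈ ℝ^M for k ≥ 1 (in the paper, d̄^k is an element of the partial subdifferential ∂_U L(U^{k+1}, V^{k+1}, P^{k+1})). Then ‖d̄^k‖ ≤ ‖H‖_{op}·(L_h + ρ)·‖V^{k+1} − V^k‖ for all k ≥ 1, and in particular ‖d̄^k‖ → 0 as k → ∞. -/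
open scoped RealInnerProductSpace
open Filter

/-!
The V-step minimises a smooth function over all of `ℝᴺ`, so its first-order condition and the
dual update give `P^{k+1} = -∇h(V^{k+1})`. Dual increments are therefore bounded by `L_h` times
primal increments, which is the bound on `d̄^k`.

For the limit, `ℓ_k = L(U^k, V^k, P^k)` decreases from `k = 1` on by at least `c ‖V^{k+1} - V^k‖²` with
`c = (ρ - L_h)/2 - L_h²/ρ > 0`: the U-step does not increase it, the V-step decreases it by
`(ρ - L_h)/2 ‖ΔV‖²` (descent lemma), and the P-step raises it by `‖ΔP‖²/ρ ≤ L_h²/ρ ‖ΔV‖²`.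
Since `P = -∇h(V)`, the descent lemma and `f, h ≥ 0` also give `ℓ_k ≥ 0`, so `‖ΔV‖ → 0`.
-/

open Set Topology

section DescentLemma

variable {E : Type*} [NormedAddCommGroup E] [InnerProductSpace ℝ E] [CompleteSpace E]

theorem sub_sub_deriv_le_of_deriv_sub_le {φ φ' : ℝ → ℝ} {K : ℝ}
    (hφ : ∀ t, HasDerivAt φ (φ' t) t) (hK : ∀ t ∈ Icc (0 : ℝ) 1, φ' t - φ' 0 ≤ K * t) :
    φ 1 - φ 0 - φ' 0 ≤ K / 2 := by
  have hcont : Continuous φ := continuous_iff_continuousAt.2 fun t => (hφ t).continuousAt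
  have hmono : MonotoneOn (fun t => K / 2 * t ^ 2 + φ' 0 * t - φ t) (Icc 0 1) := by
    refine monotoneOn_of_hasDerivWithinAt_nonneg (f' := fun t => K * t + φ' 0 - φ' t)
      (convex_Icc 0 1) (by fun_prop) (fun t _ => ?_) (fun t ht => ?_)
    · refine HasDerivAt.hasDerivWithinAt ?_
      convert (((hasDerivAt_pow 2 t).const_mul (K / 2)).fun_add
        ((hasDerivAt_id' t).const_mul (φ' 0))).fun_sub (hφ t) using 1
      ring
    · rw [interior_Icc] at ht
      linarith [hK t (Ioo_subset_Icc_self ht)]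
  have hends := hmono (left_mem_Icc.2 zero_le_one) (right_mem_Icc.2 zero_le_one) zero_le_one
  simp only at hends
  linarith

theorem abs_sub_sub_inner_gradient_le {h : E → ℝ} {L : ℝ} (hdiff : Differentiable ℝ h)
    (hlip : ∀ x y, ‖gradient h x - gradient h y‖ ≤ L * ‖x - y‖) (x y : E) :
    |h y - h x - ⟪gradient h x, y - x⟫| ≤ L / 2 * ‖y - x‖ ^ 2 := by
  set d := y - x
  have hφ (t : ℝ) : HasDerivAt (fun s : ℝ => h (x + s • d)) ⟪gradient h (x + t • d), d⟫ t := by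
    have hline : HasDerivAt (fun s : ℝ => x + s • d) d t := by
      simpa using ((hasDerivAt_id t).smul_const d).const_add x
    simpa [Function.comp_def] using
      (hdiff _).hasGradientAt.hasFDerivAt.comp_hasDerivAt t hline
  have hK : ∀ t ∈ Icc (0 : ℝ) 1,
      |⟪gradient h (x + t • d), d⟫ - ⟪gradient h (x + (0 : ℝ) • d), d⟫| ≤ L * ‖d‖ ^ 2 * t := by
    intro t ht
    calc |⟪gradient h (x + t • d), d⟫ - ⟪gradient h (x + (0 : ℝ) • d), d⟫|
        = |⟪gradient h (x + t • d) - gradient h x, d⟫| := by simp [inner_sub_left]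
      _ ≤ ‖gradient h (x + t • d) - gradient h x‖ * ‖d‖ := abs_real_inner_le_norm _ _
      _ ≤ L * ‖(x + t • d) - x‖ * ‖d‖ := by gcongr; exact hlip _ _
      _ = L * ‖d‖ ^ 2 * t := by
        rw [add_sub_cancel_left, norm_smul, Real.norm_of_nonneg ht.1]; ring
  have hup := sub_sub_deriv_le_of_deriv_sub_le hφ fun t ht => (abs_le.1 (hK t ht)).2
  have hlow := sub_sub_deriv_le_of_deriv_sub_le (K := L * ‖d‖ ^ 2) (fun t => (hφ t).neg)
    fun t ht => by linarith [(abs_le.1 (hK t ht)).1]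
  simp only [Pi.neg_apply, one_smul, zero_smul, add_zero, d, add_sub_cancel] at hup hlow ⊢
  rw [abs_le]
  constructor <;> linarith

section Lagrangian

variable {M N : ℕ} (H : Matrix (Fin N) (Fin M) ℝ)

theorem mvec_eq_toEuclideanLin (U : EuclideanSpace ℝ (Fin M)) :
    mvec H U = Matrix.toEuclideanLin H U :=
  rfl

theorem norm_mvec_transpose_le (x : EuclideanSpace ℝ (Fin N)) :
    ‖mvec H.transpose x‖ ≤ ‖LinearMap.toContinuousLinearMap (Matrix.toEuclideanLin H)‖ * ‖x‖ := by
  have hadj : mvec H.transpose x =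
      (LinearMap.toContinuousLinearMap (Matrix.toEuclideanLin H)).adjoint x := by
    rw [mvec_eq_toEuclideanLin, ← Matrix.conjTranspose_eq_transpose_of_trivial,
      Matrix.toEuclideanLin_conjTranspose_eq_adjoint, LinearMap.adjoint_eq_toCLM_adjoint]
    rfl
  rw [hadj, ← LinearIsometryEquiv.norm_map ContinuousLinearMap.adjoint]
  exact ContinuousLinearMap.le_opNorm _ _

variable (ρ : ℝ) (f : EuclideanSpace ℝ (Fin M) → ℝ) (h : EuclideanSpace ℝ (Fin N) → ℝ)

theorem hasFDerivAt_lagr_V {U : EuclideanSpace ℝ (Fin M)} {V P : EuclideanSpace ℝ (Fin N)}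
    (hdiff : DifferentiableAt ℝ h V) :
    HasFDerivAt (fun V' => lagr H ρ f h U V' P)
      (InnerProductSpace.toDual ℝ (EuclideanSpace ℝ (Fin N))
        (gradient h V + P + ρ • (V - mvec H U))) V := by
  have hres := (hasFDerivAt_id (𝕜 := ℝ) V).sub_const (mvec H U)
  have hlin := ((innerSL ℝ P).hasFDerivAt (x := V - mvec H U)).comp V hres
  have hsq := hres.norm_sq.const_mul (ρ / 2)
  refine ((((hasFDerivAt_const (f U) V).add hdiff.hasGradientAt.hasFDerivAt).add hlin).add
    hsq).congr_fderiv ?_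
  ext w
  simp only [toDual_gradient, zero_add, ContinuousLinearMap.comp_id, id_eq, map_sub, map_add,
    map_smul, add_apply, sub_apply, smul_apply, coe_innerSL_apply, nsmul_eq_mul, Nat.cast_ofNat,
    smul_eq_mul, InnerProductSpace.toDual_apply_apply]
  ring

theorem gradient_add_add_smul_eq_zero_of_lagr_le {U : EuclideanSpace ℝ (Fin M)}
    {V P : EuclideanSpace ℝ (Fin N)} (hdiff : DifferentiableAt ℝ h V)
    (hmin : ∀ V', lagr H ρ f h U V P ≤ lagr H ρ f h U V' P) :
    gradient h V + P + ρ • (V - mvec H U) = 0 := by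
  have hloc : IsLocalMin (fun V' => lagr H ρ f h U V' P) V := Filter.Eventually.of_forall hmin
  exact (map_eq_zero_iff _ (InnerProductSpace.toDual ℝ _).injective).1
    (hloc.hasFDerivAt_eq_zero (hasFDerivAt_lagr_V H ρ f h hdiff))

theorem lagr_add_smul_residual (U : EuclideanSpace ℝ (Fin M)) (V P : EuclideanSpace ℝ (Fin N)) :
    lagr H ρ f h U V (P + ρ • (V - mvec H U)) = lagr H ρ f h U V P + ρ * ‖V - mvec H U‖ ^ 2 := by
  simp only [lagr, inner_add_left, real_inner_smul_left, real_inner_self_eq_norm_sq]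
  ring

theorem lagr_add_sq_le_of_gradient_eq {L : ℝ} (hdiff : Differentiable ℝ h)
    (hlip : ∀ V W, ‖gradient h V - gradient h W‖ ≤ L * ‖V - W‖)
    {U : EuclideanSpace ℝ (Fin M)} {V P : EuclideanSpace ℝ (Fin N)}
    (hopt : gradient h V + P + ρ • (V - mvec H U) = 0) (V' : EuclideanSpace ℝ (Fin N)) :
    lagr H ρ f h U V P + (ρ - L) / 2 * ‖V' - V‖ ^ 2 ≤ lagr H ρ f h U V' P := by
  have hdesc := neg_le_of_abs_le (abs_sub_sub_inner_gradient_le hdiff hlip V V')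
  have hsplit : V' - mvec H U = (V - mvec H U) + (V' - V) := by abel
  have hopt' : ⟪gradient h V + P + ρ • (V - mvec H U), V' - V⟫ = 0 := by
    rw [hopt, inner_zero_left]
  simp only [inner_add_left, real_inner_smul_left] at hopt'
  simp only [lagr, hsplit, inner_add_right, norm_add_sq_real]
  linarith

theorem lagr_neg_gradient_nonneg {L : ℝ} (hdiff : Differentiable ℝ h)
    (hlip : ∀ V W, ‖gradient h V - gradient h W‖ ≤ L * ‖V - W‖) (hLρ : L ≤ ρ)
    (hf : ∀ U, 0 ≤ f U) (hh : ∀ V, 0 ≤ h V)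
    (U : EuclideanSpace ℝ (Fin M)) (V : EuclideanSpace ℝ (Fin N)) :
    0 ≤ lagr H ρ f h U V (-gradient h V) := by
  have hdesc := le_of_abs_le (abs_sub_sub_inner_gradient_le hdiff hlip V (mvec H U))
  have hsym : mvec H U - V = -(V - mvec H U) := by abel
  rw [hsym, norm_neg, inner_neg_right] at hdesc
  simp only [lagr, inner_neg_left]
  nlinarith [hf U, hh (mvec H U), sq_nonneg ‖V - mvec H U‖]

end Lagrangian

theorem tendsto_zero_of_add_mul_sq_le {ℓ e : ℕ → ℝ} {c : ℝ} (hc : 0 < c)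
    (hbdd : BddBelow (range ℓ)) (hdesc : ∀ k, ℓ (k + 1) + c * e k ^ 2 ≤ ℓ k) :
    Tendsto e atTop (𝓝 0) := by
  have hanti : Antitone ℓ :=
    antitone_nat_of_succ_le fun k => by nlinarith [hdesc k, sq_nonneg (e k)]
  have hlim := tendsto_atTop_ciInf hanti hbdd
  have hgap : Tendsto (fun k => (ℓ k - ℓ (k + 1)) / c) atTop (𝓝 0) := by
    simpa using (hlim.sub ((tendsto_add_atTop_iff_nat 1).2 hlim)).div_const c
  have hsq : Tendsto (fun k => e k ^ 2) atTop (𝓝 0) :=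
    squeeze_zero (fun k => sq_nonneg _)
      (fun k => by rw [le_div_iff₀ hc]; linarith [hdesc k]) hgap
  rw [tendsto_zero_iff_abs_tendsto_zero]
  simpa [Real.sqrt_sq_eq_abs, Function.comp_def] using hsq.sqrt

structure IsADMMIterates {M N : ℕ} (H : Matrix (Fin N) (Fin M) ℝ) (ρ : ℝ)
    (f : EuclideanSpace ℝ (Fin M) → ℝ) (h : EuclideanSpace ℝ (Fin N) → ℝ)
    (K : Set (EuclideanSpace ℝ (Fin M)))
    (U : ℕ → EuclideanSpace ℝ (Fin M)) (V P : ℕ → EuclideanSpace ℝ (Fin N)) : Prop where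
  mem : ∀ k, U k ∈ K
  min_U : ∀ k, ∀ U' ∈ K, lagr H ρ f h (U (k + 1)) (V k) (P k) ≤ lagr H ρ f h U' (V k) (P k)
  min_V : ∀ k V', lagr H ρ f h (U (k + 1)) (V (k + 1)) (P k) ≤ lagr H ρ f h (U (k + 1)) V' (P k)
  dual_update : ∀ k, P (k + 1) = P k + ρ • (V (k + 1) - mvec H (U (k + 1)))

namespace IsADMMIterates

variable {M N : ℕ} {H : Matrix (Fin N) (Fin M) ℝ} {ρ L : ℝ}
  {f : EuclideanSpace ℝ (Fin M) → ℝ} {h : EuclideanSpace ℝ (Fin N) → ℝ}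
  {K : Set (EuclideanSpace ℝ (Fin M))}
  {U : ℕ → EuclideanSpace ℝ (Fin M)} {V P : ℕ → EuclideanSpace ℝ (Fin N)}

theorem dual_succ_eq_neg_gradient (hA : IsADMMIterates H ρ f h K U V P)
    (hdiff : Differentiable ℝ h) (k : ℕ) : P (k + 1) = -gradient h (V (k + 1)) := by
  have hopt := gradient_add_add_smul_eq_zero_of_lagr_le H ρ f h (hdiff _) (hA.min_V k)
  rw [hA.dual_update k, eq_neg_iff_add_eq_zero, ← hopt]
  abel

theorem norm_dual_sub_le (hA : IsADMMIterates H ρ f h K U V P) (hdiff : Differentiable ℝ h)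
    (hlip : ∀ V W, ‖gradient h V - gradient h W‖ ≤ L * ‖V - W‖) (k : ℕ) :
    ‖P (k + 1) - P (k + 2)‖ ≤ L * ‖V (k + 2) - V (k + 1)‖ := by
  rw [hA.dual_succ_eq_neg_gradient hdiff, hA.dual_succ_eq_neg_gradient hdiff, neg_sub_neg]
  exact hlip _ _

theorem norm_residual_le (hA : IsADMMIterates H ρ f h K U V P) (hdiff : Differentiable ℝ h)
    (hlip : ∀ V W, ‖gradient h V - gradient h W‖ ≤ L * ‖V - W‖) (hρ : 0 ≤ ρ) (k : ℕ) :
    ‖mvec H.transpose (P (k + 1) - P (k + 2)) + ρ • mvec H.transpose (V (k + 1) - V (k + 2))‖ ≤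
      ‖LinearMap.toContinuousLinearMap (Matrix.toEuclideanLin H)‖ * (L + ρ) *
        ‖V (k + 2) - V (k + 1)‖ := by
  have hsum : ‖(P (k + 1) - P (k + 2)) + ρ • (V (k + 1) - V (k + 2))‖ ≤
      (L + ρ) * ‖V (k + 2) - V (k + 1)‖ := by
    grw [norm_add_le, norm_smul, Real.norm_of_nonneg hρ, norm_sub_rev (V _),
      hA.norm_dual_sub_le hdiff hlip k]
    exact (add_mul _ _ _).ge
  calc _ = ‖mvec H.transpose ((P (k + 1) - P (k + 2)) + ρ • (V (k + 1) - V (k + 2)))‖ := by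
        simp only [mvec_eq_toEuclideanLin, map_add, map_smul]
    _ ≤ _ := norm_mvec_transpose_le H _
    _ ≤ _ := by rw [mul_assoc]; gcongr

theorem lagr_succ_add_le (hA : IsADMMIterates H ρ f h K U V P) (hdiff : Differentiable ℝ h)
    (hlip : ∀ V W, ‖gradient h V - gradient h W‖ ≤ L * ‖V - W‖) (hρ : 0 < ρ) (k : ℕ) :
    lagr H ρ f h (U (k + 2)) (V (k + 2)) (P (k + 2)) +
        ((ρ - L) / 2 - L ^ 2 / ρ) * ‖V (k + 2) - V (k + 1)‖ ^ 2 ≤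
      lagr H ρ f h (U (k + 1)) (V (k + 1)) (P (k + 1)) := by
  set r := V (k + 2) - mvec H (U (k + 2))
  set e := ‖V (k + 2) - V (k + 1)‖
  have hU := hA.min_U (k + 1) (U (k + 1)) (hA.mem _)
  have hV := lagr_add_sq_le_of_gradient_eq H ρ f h hdiff hlip
    (gradient_add_add_smul_eq_zero_of_lagr_le H ρ f h (hdiff _) (hA.min_V (k + 1))) (V (k + 1))
  have hP : lagr H ρ f h (U (k + 2)) (V (k + 2)) (P (k + 2)) =
      lagr H ρ f h (U (k + 2)) (V (k + 2)) (P (k + 1)) + ρ * ‖r‖ ^ 2 := by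
    rw [hA.dual_update (k + 1)]
    exact lagr_add_smul_residual H ρ f h _ _ _
  have hr : ρ * ‖r‖ ≤ L * e := by
    have := hA.norm_dual_sub_le hdiff hlip k
    rwa [hA.dual_update (k + 1), sub_add_cancel_left, norm_neg, norm_smul,
      Real.norm_of_nonneg hρ.le] at this
  have hr2 : ρ * ‖r‖ ^ 2 ≤ L ^ 2 / ρ * e ^ 2 := by
    rw [div_mul_eq_mul_div, le_div_iff₀ hρ]
    nlinarith [pow_le_pow_left₀ (by positivity) hr 2]
  rw [norm_sub_rev] at hV
  linarith

theorem lagr_nonneg (hA : IsADMMIterates H ρ f h K U V P) (hdiff : Differentiable ℝ h)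
    (hlip : ∀ V W, ‖gradient h V - gradient h W‖ ≤ L * ‖V - W‖) (hLρ : L ≤ ρ)
    (hf : ∀ U, 0 ≤ f U) (hh : ∀ V, 0 ≤ h V) (k : ℕ) :
    0 ≤ lagr H ρ f h (U (k + 1)) (V (k + 1)) (P (k + 1)) := by
  rw [hA.dual_succ_eq_neg_gradient hdiff]
  exact lagr_neg_gradient_nonneg H ρ f h hdiff hlip hLρ hf hh _ _

end IsADMMIterates

/-- Lemma 3.4: the stationarity residual
`d̄^k = Hᵀ(P^k − P^{k+1}) + ρ Hᵀ(V^k − V^{k+1})` (an element of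
`∂_U L(U^{k+1},V^{k+1},P^{k+1})`) satisfies
`‖d̄^k‖ ≤ ‖H‖_op (L_h + ρ) ‖V^{k+1} − V^k‖` for `k ≥ 1`, hence tends to zero. -/
theorem admm_stationarity_residual_vanishes
    {M N : ℕ} (H : Matrix (Fin N) (Fin M) ℝ) (ρ Lh : ℝ)
    (hρ : 0 < ρ) (hLh : 0 < Lh)
    (f : EuclideanSpace ℝ (Fin M) → ℝ) (h : EuclideanSpace ℝ (Fin N) → ℝ)
    (hdiff : Differentiable ℝ h)
    (hlip : ∀ V W : EuclideanSpace ℝ (Fin N),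
      ‖gradient h V - gradient h W‖ ≤ Lh * ‖V - W‖)
    (U : ℕ → EuclideanSpace ℝ (Fin M)) (V P : ℕ → EuclideanSpace ℝ (Fin N))
    (hUK : ∀ k, U k ∈ Kbox M)
    (hUmin : ∀ k, ∀ U' ∈ Kbox M,
      lagr H ρ f h (U (k+1)) (V k) (P k) ≤ lagr H ρ f h U' (V k) (P k))
    (hVmin : ∀ k, ∀ V' : EuclideanSpace ℝ (Fin N),
      lagr H ρ f h (U (k+1)) (V (k+1)) (P k) ≤ lagr H ρ f h (U (k+1)) V' (P k))
    (hPup : ∀ k, P (k+1) = P k + ρ • (V (k+1) - mvec H (U (k+1))))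
    (hcond : 0 < ρ / 2 - Lh / ρ - Lh)
    (hf : ∀ U' : EuclideanSpace ℝ (Fin M), 0 ≤ f U')
    (hh : ∀ V' : EuclideanSpace ℝ (Fin N), 0 ≤ h V')
    :
    (∀ k : ℕ, 1 ≤ k →
      ‖mvec H.transpose (P k - P (k+1)) + ρ • mvec H.transpose (V k - V (k+1))‖ ≤
        ‖LinearMap.toContinuousLinearMap (Matrix.toEuclideanLin H)‖ * (Lh + ρ) *
          ‖V (k+1) - V k‖) ∧
      Tendsto
        (fun k => ‖mvec H.transpose (P k - P (k+1)) +
          ρ • mvec H.transpose (V k - V (k+1))‖) atTop (nhds 0) := by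
  have hA : IsADMMIterates H ρ f h (Kbox M) U V P := ⟨hUK, hUmin, hVmin, hPup⟩
  have hρLh : 2 * Lh < ρ := by nlinarith [div_pos hLh hρ]
  have hc : 0 < (ρ - Lh) / 2 - Lh ^ 2 / ρ := by
    have : Lh ^ 2 / ρ < Lh / 2 := by
      rw [div_lt_iff₀ hρ]
      nlinarith
    linarith
  refine ⟨fun k hk => ?_, ?_⟩
  · obtain ⟨j, rfl⟩ := Nat.exists_eq_add_of_le' hk
    exact hA.norm_residual_le hdiff hlip hρ.le j
  have hV : Tendsto (fun k => ‖V (k + 2) - V (k + 1)‖) atTop (𝓝 0) := by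
    refine tendsto_zero_of_add_mul_sq_le hc ⟨0, ?_⟩ (hA.lagr_succ_add_le hdiff hlip hρ)
      (ℓ := fun k => lagr H ρ f h (U (k + 1)) (V (k + 1)) (P (k + 1)))
    rintro _ ⟨k, rfl⟩
    exact hA.lagr_nonneg hdiff hlip (by linarith) hf hh k
  refine (tendsto_add_atTop_iff_nat 1).1 (squeeze_zero (fun k => norm_nonneg _)
    (hA.norm_residual_le hdiff hlip hρ.le) ?_)
  simpa using hV.const_mul _
end DescentLemma
end

section
/- (Theorem 3.1, subsequential convergence to a stationary point.) Assume ρ/2 − L_h/ρ − L_h > 0, f ≥ 0 and h ≥ 0, and that f is lower semicontinuous. Then for ADMM iterates (U^k, V^k, P^k) as in the context, there exist a strictly increasing sequence (k_s) and a point (U*, V*, P*) with U* ∈ K such that U^{k_s} → U*, V^{k_s} → V*, P^{k_s} → P*, and (U*, V*, P*) is a stationary point of L in the sense that: (i) V* = H U*; (ii) ∇h(V*) + P* = 0; and (iii) L(U, V*, P*) ≥ L(U*, V*, P*) for every U ∈ K. -/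
open scoped RealInnerProductSpace
open Filter

section aux
variable {E : Type*} [NormedAddCommGroup E] [InnerProductSpace ℝ E] [CompleteSpace E]

lemma hasDerivAt_line (h : E → ℝ) (hdiff : Differentiable ℝ h) (V Δ : E) (t : ℝ) :
    HasDerivAt (fun t : ℝ => h (V + t • Δ)) ⟪gradient h (V + t • Δ), Δ⟫ t := by
  have h1 : HasDerivAt (fun t : ℝ => V + t • Δ) Δ t := by
    simpa using ((hasDerivAt_id t).smul_const Δ).const_add V
  have h2 := (hdiff (V + t • Δ)).hasGradientAt
  rw [hasGradientAt_iff_hasFDerivAt] at h2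
  have := h2.comp_hasDerivAt t h1
  rw [InnerProductSpace.toDual_apply_apply] at this
  exact this

end aux

section aux2
variable {E : Type*} [NormedAddCommGroup E] [InnerProductSpace ℝ E] [CompleteSpace E]

lemma descent_upper (h : E → ℝ) (Lh : ℝ) (hLh : 0 ≤ Lh)
    (hdiff : Differentiable ℝ h)
    (hlip : ∀ V W : E, ‖gradient h V - gradient h W‖ ≤ Lh * ‖V - W‖)
    (V W : E) :
    h W ≤ h V + ⟪gradient h V, W - V⟫ + Lh / 2 * ‖W - V‖ ^ 2 := by
  set Δ := W - V with hΔ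
  set φ : ℝ → ℝ := fun t => h (V + t • Δ) - t * ⟪gradient h V, Δ⟫ - Lh / 2 * t ^ 2 * ‖Δ‖ ^ 2
    with hφ
  have hder : ∀ t : ℝ, HasDerivAt φ
      (⟪gradient h (V + t • Δ), Δ⟫ - ⟪gradient h V, Δ⟫ - Lh * t * ‖Δ‖ ^ 2) t := by
    intro t
    have h1 := hasDerivAt_line h hdiff V Δ t
    have h2 : HasDerivAt (fun t : ℝ => t * ⟪gradient h V, Δ⟫) ⟪gradient h V, Δ⟫ t := by
      simpa using (hasDerivAt_id t).mul_const (⟪gradient h V, Δ⟫)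
    have h3 : HasDerivAt (fun t : ℝ => Lh / 2 * t ^ 2 * ‖Δ‖ ^ 2) (Lh * t * ‖Δ‖ ^ 2) t := by
      have := ((hasDerivAt_pow 2 t).const_mul (Lh / 2)).mul_const (‖Δ‖ ^ 2)
      exact this.congr_deriv (by ring)
    exact (h1.sub h2).sub h3
  have hanti : AntitoneOn φ (Set.Icc (0:ℝ) 1) := by
    apply antitoneOn_of_deriv_nonpos (convex_Icc 0 1)
    · exact fun t _ => ((hder t).continuousAt).continuousWithinAt
    · exact fun t _ => ((hder t).differentiableAt).differentiableWithinAt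
    · intro t ht
      rw [interior_Icc] at ht
      rw [(hder t).deriv]
      have hb : ⟪gradient h (V + t • Δ) - gradient h V, Δ⟫ ≤ Lh * t * ‖Δ‖ ^ 2 := by
        calc ⟪gradient h (V + t • Δ) - gradient h V, Δ⟫
            ≤ ‖gradient h (V + t • Δ) - gradient h V‖ * ‖Δ‖ := real_inner_le_norm _ _
          _ ≤ (Lh * ‖(V + t • Δ) - V‖) * ‖Δ‖ := by
              gcongr; exact hlip _ _
          _ = Lh * t * ‖Δ‖ ^ 2 := by
              simp [norm_smul, abs_of_pos ht.1]
              ring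
      rw [inner_sub_left] at hb
      linarith
  have := hanti (Set.left_mem_Icc.2 zero_le_one) (Set.right_mem_Icc.2 zero_le_one) zero_le_one
  simp only [hφ, one_smul, zero_smul, add_zero, one_pow, one_mul, zero_pow, mul_zero, zero_mul,
    sub_zero] at this
  rw [show V + Δ = W by rw [hΔ]; abel] at this
  linarith

lemma descent_lower (h : E → ℝ) (Lh : ℝ) (hLh : 0 ≤ Lh)
    (hdiff : Differentiable ℝ h)
    (hlip : ∀ V W : E, ‖gradient h V - gradient h W‖ ≤ Lh * ‖V - W‖)
    (V W : E) :
    h V + ⟪gradient h V, W - V⟫ - Lh / 2 * ‖W - V‖ ^ 2 ≤ h W := by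
  set Δ := W - V with hΔ
  set φ : ℝ → ℝ := fun t => h (V + t • Δ) - t * ⟪gradient h V, Δ⟫ + Lh / 2 * t ^ 2 * ‖Δ‖ ^ 2
    with hφ
  have hder : ∀ t : ℝ, HasDerivAt φ
      (⟪gradient h (V + t • Δ), Δ⟫ - ⟪gradient h V, Δ⟫ + Lh * t * ‖Δ‖ ^ 2) t := by
    intro t
    have h1 := hasDerivAt_line h hdiff V Δ t
    have h2 : HasDerivAt (fun t : ℝ => t * ⟪gradient h V, Δ⟫) ⟪gradient h V, Δ⟫ t := by
      simpa using (hasDerivAt_id t).mul_const (⟪gradient h V, Δ⟫)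
    have h3 : HasDerivAt (fun t : ℝ => Lh / 2 * t ^ 2 * ‖Δ‖ ^ 2) (Lh * t * ‖Δ‖ ^ 2) t := by
      have := ((hasDerivAt_pow 2 t).const_mul (Lh / 2)).mul_const (‖Δ‖ ^ 2)
      exact this.congr_deriv (by ring)
    exact (h1.sub h2).add h3
  have hmono : MonotoneOn φ (Set.Icc (0:ℝ) 1) := by
    apply monotoneOn_of_deriv_nonneg (convex_Icc 0 1)
    · exact fun t _ => ((hder t).continuousAt).continuousWithinAt
    · exact fun t _ => ((hder t).differentiableAt).differentiableWithinAt
    · intro t ht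
      rw [interior_Icc] at ht
      rw [(hder t).deriv]
      have hb : ⟪gradient h V - gradient h (V + t • Δ), Δ⟫ ≤ Lh * t * ‖Δ‖ ^ 2 := by
        calc ⟪gradient h V - gradient h (V + t • Δ), Δ⟫
            ≤ ‖gradient h V - gradient h (V + t • Δ)‖ * ‖Δ‖ := real_inner_le_norm _ _
          _ ≤ (Lh * ‖V - (V + t • Δ)‖) * ‖Δ‖ := by
              gcongr; exact hlip _ _
          _ = Lh * t * ‖Δ‖ ^ 2 := by
              have : V - (V + t • Δ) = -(t • Δ) := by abel
              rw [this, norm_neg]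
              simp [norm_smul, abs_of_pos ht.1]
              ring
      rw [inner_sub_left] at hb
      linarith
  have := hmono (Set.left_mem_Icc.2 zero_le_one) (Set.right_mem_Icc.2 zero_le_one) zero_le_one
  simp only [hφ, one_smul, zero_smul, add_zero, one_pow, one_mul, zero_pow, mul_zero, zero_mul,
    sub_zero] at this
  rw [show V + Δ = W by rw [hΔ]; abel] at this
  linarith
end aux2

section aux3
variable {E : Type*} [NormedAddCommGroup E] [InnerProductSpace ℝ E] [CompleteSpace E]

lemma quad_expand (P A V W : E) (ρ : ℝ) :
    ⟪P, W - A⟫ + ρ / 2 * ‖W - A‖ ^ 2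
      = ⟪P, V - A⟫ + ρ / 2 * ‖V - A‖ ^ 2 + ⟪P + ρ • (V - A), W - V⟫ + ρ / 2 * ‖W - V‖ ^ 2 := by
  have h1 : W - A = (V - A) + (W - V) := by abel
  rw [h1, norm_add_sq_real, inner_add_right, inner_add_left, real_inner_smul_left]
  ring

lemma vmin_grad (h : E → ℝ) (Lh ρ : ℝ) (hLh : 0 ≤ Lh) (hρ : 0 < ρ)
    (hdiff : Differentiable ℝ h)
    (hlip : ∀ V W : E, ‖gradient h V - gradient h W‖ ≤ Lh * ‖V - W‖)
    (P A Vm : E)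
    (hmin : ∀ W : E, h Vm + ⟪P, Vm - A⟫ + ρ / 2 * ‖Vm - A‖ ^ 2
      ≤ h W + ⟪P, W - A⟫ + ρ / 2 * ‖W - A‖ ^ 2) :
    gradient h Vm + P + ρ • (Vm - A) = 0 := by
  set G := gradient h Vm + P + ρ • (Vm - A) with hG
  set C := (Lh + ρ) / 2 with hC
  have hCpos : 0 < C := by positivity
  have key : ∀ W : E, (0:ℝ) ≤ ⟪G, W - Vm⟫ + C * ‖W - Vm‖ ^ 2 := by
    intro W
    have h1 := hmin W
    have h2 := descent_upper h Lh hLh hdiff hlip Vm W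
    have h3 := quad_expand P A Vm W ρ
    rw [hG]
    rw [inner_add_left]
    have : ⟪gradient h Vm, W - Vm⟫ + ⟪P + ρ • (Vm - A), W - Vm⟫ + C * ‖W - Vm‖ ^ 2
        = (h W + ⟪P, W - A⟫ + ρ / 2 * ‖W - A‖ ^ 2)
          - (h Vm + ⟪P, Vm - A⟫ + ρ / 2 * ‖Vm - A‖ ^ 2)
          + (h Vm + ⟪gradient h Vm, W - Vm⟫ + Lh / 2 * ‖W - Vm‖ ^ 2 - h W) := by
      rw [hC]; linear_combination -h3
    rw [inner_add_left] at this ⊢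
    linarith
  by_contra hne
  have hGn : 0 < ‖G‖ ^ 2 := by
    have hg : 0 < ‖G‖ := norm_pos_iff.mpr hne
    positivity
  have := key (Vm - (1 / (2 * C)) • G)
  rw [show Vm - (1 / (2 * C)) • G - Vm = -((1 / (2 * C)) • G) by abel] at this
  rw [inner_neg_right, real_inner_smul_right, norm_neg, norm_smul, real_inner_self_eq_norm_sq]
    at this
  rw [Real.norm_eq_abs, abs_of_pos (by positivity), mul_pow] at this
  have hne' : (2 * C) ≠ 0 := by positivity
  have : (0:ℝ) ≤ -(1 / (2 * C)) * ‖G‖ ^ 2 + C * (1 / (2 * C)) ^ 2 * ‖G‖ ^ 2 := by linarith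
  have hfinal : -(1 / (2 * C)) * ‖G‖ ^ 2 + C * (1 / (2 * C)) ^ 2 * ‖G‖ ^ 2
      = -(1 / (4 * C)) * ‖G‖ ^ 2 := by field_simp; ring
  rw [hfinal] at this
  have h4 : 0 < 1 / (4 * C) := by positivity
  nlinarith [mul_pos h4 hGn]
end aux3

set_option maxHeartbeats 2000000

/-- Theorem 3.1: subsequential convergence of ADMM iterates to a stationary point
of the augmented Lagrangian. -/
theorem admm_subsequential_convergence
    {M N : ℕ} (H : Matrix (Fin N) (Fin M) ℝ) (ρ Lh : ℝ)
    (hρ : 0 < ρ) (hLh : 0 < Lh)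
    (f : EuclideanSpace ℝ (Fin M) → ℝ) (h : EuclideanSpace ℝ (Fin N) → ℝ)
    (hdiff : Differentiable ℝ h)
    (hlip : ∀ V W : EuclideanSpace ℝ (Fin N),
      ‖gradient h V - gradient h W‖ ≤ Lh * ‖V - W‖)
    (U : ℕ → EuclideanSpace ℝ (Fin M)) (V P : ℕ → EuclideanSpace ℝ (Fin N))
    (hUK : ∀ k, U k ∈ Kbox M)
    (hUmin : ∀ k, ∀ U' ∈ Kbox M,
      lagr H ρ f h (U (k+1)) (V k) (P k) ≤ lagr H ρ f h U' (V k) (P k))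
    (hVmin : ∀ k, ∀ V' : EuclideanSpace ℝ (Fin N),
      lagr H ρ f h (U (k+1)) (V (k+1)) (P k) ≤ lagr H ρ f h (U (k+1)) V' (P k))
    (hPup : ∀ k, P (k+1) = P k + ρ • (V (k+1) - mvec H (U (k+1))))
    (hcond : 0 < ρ / 2 - Lh / ρ - Lh)
    (hf : ∀ U' : EuclideanSpace ℝ (Fin M), 0 ≤ f U')
    (hh : ∀ V' : EuclideanSpace ℝ (Fin N), 0 ≤ h V')
    (hlsc : LowerSemicontinuous f)
    :
    ∃ (ks : ℕ → ℕ) (Ustar : EuclideanSpace ℝ (Fin M))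
      (Vstar Pstar : EuclideanSpace ℝ (Fin N)),
      StrictMono ks ∧
      Ustar ∈ Kbox M ∧
      Tendsto (fun s => U (ks s)) atTop (nhds Ustar) ∧
      Tendsto (fun s => V (ks s)) atTop (nhds Vstar) ∧
      Tendsto (fun s => P (ks s)) atTop (nhds Pstar) ∧
      Vstar = mvec H Ustar ∧
      gradient h Vstar + Pstar = 0 ∧
      ∀ U' ∈ Kbox M, lagr H ρ f h Ustar Vstar Pstar ≤ lagr H ρ f h U' Vstar Pstar := by
  classical
  have hidx : ∀ n : ℕ, n + 1 + 1 = n + 2 := fun n => by omega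
  -- linearity and continuity of mvec
  let mvL : EuclideanSpace ℝ (Fin M) →ₗ[ℝ] EuclideanSpace ℝ (Fin N) :=
    { toFun := mvec H
      map_add' := fun x y => by
        ext i; simp [mvec, Matrix.mulVec_add]
      map_smul' := fun c x => by
        ext i; simp [mvec, Matrix.mulVec_smul] }
  have hmvc : Continuous (mvec H) := mvL.continuous_of_finiteDimensional
  let mvCL := LinearMap.toContinuousLinearMap mvL
  have hCH : ∀ x, ‖mvec H x‖ ≤ ‖mvCL‖ * ‖x‖ := fun x => mvCL.le_opNorm x
  -- first-order condition of the V-step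
  have hgrad0 : ∀ k, gradient h (V (k+1)) + P k + ρ • (V (k+1) - mvec H (U (k+1))) = 0 := by
    intro k
    apply vmin_grad h Lh ρ hLh.le hρ hdiff hlip (P k) (mvec H (U (k+1))) (V (k+1))
    intro W
    have := hVmin k W
    simp only [lagr] at this
    linarith
  have hgrad : ∀ k, gradient h (V (k+1)) + P (k+1) = 0 := by
    intro k
    rw [hPup k, ← hgrad0 k]
    abel
  have hPneg : ∀ k, P (k+1) = - gradient h (V (k+1)) := fun k =>
    eq_neg_of_add_eq_zero_left (by rw [add_comm]; exact hgrad k)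
  -- V-step sufficient decrease
  have hVdec : ∀ k, lagr H ρ f h (U (k+1)) (V (k+1)) (P k)
      + (ρ - Lh)/2 * ‖V (k+1) - V k‖^2 ≤ lagr H ρ f h (U (k+1)) (V k) (P k) := by
    intro k
    have hq := quad_expand (P k) (mvec H (U (k+1))) (V (k+1)) (V k) ρ
    have hd := descent_lower h Lh hLh.le hdiff hlip (V (k+1)) (V k)
    have h0' : gradient h (V (k+1)) + (P k + ρ • (V (k+1) - mvec H (U (k+1)))) = 0 := by
      rw [← hgrad0 k]; abel
    have hip : ⟪gradient h (V (k+1)), V k - V (k+1)⟫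
        + ⟪P k + ρ • (V (k+1) - mvec H (U (k+1))), V k - V (k+1)⟫ = 0 := by
      rw [← inner_add_left, h0', inner_zero_left]
    rw [show ‖V k - V (k+1)‖ = ‖V (k+1) - V k‖ from norm_sub_rev _ _] at hq hd
    simp only [lagr]
    linarith
  -- P-step increase
  have hPinc : ∀ k, lagr H ρ f h (U (k+1)) (V (k+1)) (P (k+1))
      = lagr H ρ f h (U (k+1)) (V (k+1)) (P k)
        + ρ * ‖V (k+1) - mvec H (U (k+1))‖^2 := by
    intro k
    simp only [lagr]
    rw [hPup k, inner_add_left, real_inner_smul_left, real_inner_self_eq_norm_sq]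
    ring
  -- residual bound for k ≥ 1
  have hres : ∀ j, ρ * ‖V (j+2) - mvec H (U (j+2))‖ ≤ Lh * ‖V (j+2) - V (j+1)‖ := by
    intro j
    have e1 : ρ • (V (j+2) - mvec H (U (j+2)))
        = gradient h (V (j+1)) - gradient h (V (j+2)) := by
      have h3 := hPup (j+1)
      rw [hidx] at h3
      have e0 : ρ • (V (j+2) - mvec H (U (j+2))) = P (j+2) - P (j+1) := by
        rw [h3]; abel
      rw [e0]
      have e2 := hPneg (j+1)
      rw [hidx] at e2
      rw [e2, hPneg j]
      abel
    calc ρ * ‖V (j+2) - mvec H (U (j+2))‖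
        = ‖ρ • (V (j+2) - mvec H (U (j+2)))‖ := by
          rw [norm_smul, Real.norm_eq_abs, abs_of_pos hρ]
      _ = ‖gradient h (V (j+1)) - gradient h (V (j+2))‖ := by rw [e1]
      _ ≤ Lh * ‖V (j+1) - V (j+2)‖ := hlip _ _
      _ = Lh * ‖V (j+2) - V (j+1)‖ := by rw [norm_sub_rev]
  -- constants
  have hcond' : Lh * ρ + Lh < ρ^2 / 2 := by
    have h1 := mul_pos hρ hcond
    have h2 : ρ * (ρ/2 - Lh/ρ - Lh) = ρ^2/2 - Lh - Lh*ρ := by field_simp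
    rw [h2] at h1; linarith
  have hρ2 : 2 * Lh < ρ := by nlinarith [hcond', hρ, hLh]
  have hLh2 : Lh^2/ρ < Lh/2 := by
    rw [div_lt_iff₀ hρ]
    nlinarith [hρ2, hLh]
  set c : ℝ := (ρ - Lh)/2 - Lh^2/ρ with hc_def
  have hc : 0 < c := by rw [hc_def]; linarith
  -- per-step descent for k ≥ 1
  set b : ℕ → ℝ := fun j => lagr H ρ f h (U (j+1)) (V (j+1)) (P (j+1)) with hb_def
  have hstep : ∀ j, b (j+1) + c * ‖V (j+2) - V (j+1)‖^2 ≤ b j := by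
    intro j
    have h1 := hPinc (j+1)
    have h2 := hVdec (j+1)
    have h3 := hUmin (j+1) (U (j+1)) (hUK (j+1))
    rw [hidx] at h1 h2 h3
    have h4 : ρ * ‖V (j+2) - mvec H (U (j+2))‖^2
        ≤ Lh^2/ρ * ‖V (j+2) - V (j+1)‖^2 := by
      rw [div_mul_eq_mul_div, le_div_iff₀ hρ]
      nlinarith [mul_le_mul (hres j) (hres j)
        (by positivity) (by positivity : (0:ℝ) ≤ Lh * ‖V (j+2) - V (j+1)‖)]
    simp only [hb_def, hc_def]
    linarith
  -- lower bound
  have hlb : ∀ j, 0 ≤ b j := by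
    intro j
    simp only [hb_def, lagr]
    have hgu := descent_upper h Lh hLh.le hdiff hlip (V (j+1)) (mvec H (U (j+1)))
    rw [hPneg j, inner_neg_left]
    have h1 : ⟪gradient h (V (j+1)), mvec H (U (j+1)) - V (j+1)⟫
        = - ⟪gradient h (V (j+1)), V (j+1) - mvec H (U (j+1))⟫ := by
      rw [← inner_neg_right]; congr 1; abel
    have h2 : ‖mvec H (U (j+1)) - V (j+1)‖^2 = ‖V (j+1) - mvec H (U (j+1))‖^2 := by
      rw [norm_sub_rev]
    have h3 := hf (U (j+1))
    have h4 := hh (mvec H (U (j+1)))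
    have h5 : 0 ≤ (ρ - Lh)/2 * ‖V (j+1) - mvec H (U (j+1))‖^2 :=
      mul_nonneg (by linarith) (sq_nonneg _)
    rw [h1, h2] at hgu
    linarith
  -- convergence of b and of successive differences
  have hbanti : Antitone b := antitone_nat_of_succ_le (fun j => by
    have := hstep j
    nlinarith [mul_nonneg hc.le (sq_nonneg ‖V (j+2) - V (j+1)‖)])
  have hbbdd : BddBelow (Set.range b) := ⟨0, by rintro x ⟨j, rfl⟩; exact hlb j⟩
  have hbconv : Tendsto b atTop (nhds (⨅ j, b j)) := tendsto_atTop_ciInf hbanti hbbdd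
  have hbdiff : Tendsto (fun j => b j - b (j+1)) atTop (nhds 0) := by
    have h1 : Tendsto (fun j => b (j+1)) atTop (nhds (⨅ j, b j)) :=
      hbconv.comp (tendsto_add_atTop_nat 1)
    simpa using hbconv.sub h1
  have hsq0 : Tendsto (fun j => ‖V (j+2) - V (j+1)‖^2) atTop (nhds 0) := by
    have hle : ∀ j, ‖V (j+2) - V (j+1)‖^2 ≤ (b j - b (j+1))/c := by
      intro j
      rw [le_div_iff₀ hc]
      have := hstep j
      linarith
    exact squeeze_zero (fun j => sq_nonneg _) hle (by simpa using hbdiff.div_const c)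
  have hεV : Tendsto (fun j => ‖V (j+2) - V (j+1)‖) atTop (nhds 0) := by
    have h1 := hsq0.sqrt
    simp only [Real.sqrt_zero] at h1
    have h2 : (fun j => Real.sqrt (‖V (j+2) - V (j+1)‖^2))
        = fun j => ‖V (j+2) - V (j+1)‖ :=
      funext fun j => Real.sqrt_sq (norm_nonneg _)
    rwa [h2] at h1
  have hΔP : ∀ j, ‖P (j+2) - P (j+1)‖ ≤ Lh * ‖V (j+2) - V (j+1)‖ := by
    intro j
    have h3 := hPup (j+1)
    rw [hidx] at h3
    have e0 : P (j+2) - P (j+1) = ρ • (V (j+2) - mvec H (U (j+2))) := by rw [h3]; abel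
    rw [e0, norm_smul, Real.norm_eq_abs, abs_of_pos hρ]
    exact hres j
  have hεP : Tendsto (fun j => ‖P (j+2) - P (j+1)‖) atTop (nhds 0) := by
    apply squeeze_zero (fun j => norm_nonneg _) hΔP
    simpa using hεV.const_mul Lh
  -- boundedness
  have hbU : ∀ k, ‖U k‖ ≤ Real.sqrt M := by
    intro k
    rw [EuclideanSpace.norm_eq]
    apply Real.sqrt_le_sqrt
    calc (∑ i, ‖U k i‖^2) ≤ ∑ _i : Fin M, (1:ℝ) := by
          apply Finset.sum_le_sum
          intro i _
          have h1 := (hUK k) i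
          rw [Real.norm_eq_abs, sq_abs]
          nlinarith [h1.1, h1.2]
      _ = M := by simp
  have hεVb : ∀ j, ‖V (j+2) - V (j+1)‖ ≤ Real.sqrt (b 0 / c) := by
    intro j
    have h1 : ‖V (j+2) - V (j+1)‖^2 ≤ b 0 / c := by
      rw [le_div_iff₀ hc]
      have h2 := hstep j
      have h3 := hbanti (Nat.zero_le j)
      have h4 := hlb (j+1)
      nlinarith
    calc ‖V (j+2) - V (j+1)‖ = Real.sqrt (‖V (j+2) - V (j+1)‖^2) :=
          (Real.sqrt_sq (norm_nonneg _)).symm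
      _ ≤ Real.sqrt (b 0 / c) := Real.sqrt_le_sqrt h1
  set CV : ℝ := ‖mvCL‖ * Real.sqrt M + Lh/ρ * Real.sqrt (b 0 / c) with hCV_def
  have hbV : ∀ j, ‖V (j+2)‖ ≤ CV := by
    intro j
    have h1 : ‖V (j+2) - mvec H (U (j+2))‖ ≤ Lh/ρ * ‖V (j+2) - V (j+1)‖ := by
      rw [div_mul_eq_mul_div, le_div_iff₀ hρ]
      have := hres j
      linarith [hres j]
    calc ‖V (j+2)‖ ≤ ‖mvec H (U (j+2))‖ + ‖V (j+2) - mvec H (U (j+2))‖ := by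
          simpa using norm_add_le (mvec H (U (j+2))) (V (j+2) - mvec H (U (j+2)))
      _ ≤ ‖mvCL‖ * Real.sqrt M + Lh/ρ * Real.sqrt (b 0 / c) := by
          apply add_le_add
          · exact le_trans (hCH _) (by
              apply mul_le_mul_of_nonneg_left (hbU _) (norm_nonneg _))
          · exact le_trans h1 (by
              apply mul_le_mul_of_nonneg_left (hεVb j) (by positivity))
  set CP : ℝ := ‖gradient h 0‖ + Lh * CV with hCP_def
  have hbP : ∀ j, ‖P (j+2)‖ ≤ CP := by
    intro j
    have e2 := hPneg (j+1)
    rw [hidx] at e2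
    rw [e2, norm_neg]
    calc ‖gradient h (V (j+2))‖
        ≤ ‖gradient h (V (j+2)) - gradient h 0‖ + ‖gradient h 0‖ := by
          simpa using norm_add_le (gradient h (V (j+2)) - gradient h 0) (gradient h 0)
      _ ≤ Lh * ‖V (j+2) - 0‖ + ‖gradient h 0‖ := by
          exact add_le_add_left (hlip _ _) _
      _ ≤ Lh * CV + ‖gradient h 0‖ := by
          rw [sub_zero]
          exact add_le_add_left (mul_le_mul_of_nonneg_left (hbV j) hLh.le) _
      _ = CP := by rw [hCP_def]; ring
  -- extraction of a convergent subsequence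
  set X : ℕ → (EuclideanSpace ℝ (Fin M) × (EuclideanSpace ℝ (Fin N) × EuclideanSpace ℝ (Fin N))) :=
    fun j => (U (j+2), (V (j+2), P (j+2))) with hX_def
  set R : ℝ := max (Real.sqrt M) (max CV CP) with hR_def
  have hXmem : ∀ j, X j ∈ Metric.closedBall (0 : EuclideanSpace ℝ (Fin M) × (EuclideanSpace ℝ (Fin N) × EuclideanSpace ℝ (Fin N))) R := by
    intro j
    rw [Metric.mem_closedBall, dist_zero_right]
    have : ‖X j‖ = max ‖U (j+2)‖ (max ‖V (j+2)‖ ‖P (j+2)‖) := rfl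
    rw [this]
    apply max_le
    · exact le_trans (hbU _) (le_max_left _ _)
    · apply max_le
      · exact le_trans (hbV j) (le_trans (le_max_left _ _) (le_max_right _ _))
      · exact le_trans (hbP j) (le_trans (le_max_right _ _) (le_max_right _ _))
  obtain ⟨a, -, φ, hφ, hXconv⟩ :=
    tendsto_subseq_of_bounded Metric.isBounded_closedBall hXmem
  have hφtop : Tendsto φ atTop atTop := hφ.tendsto_atTop
  set Ustar := a.1 with hUstar_def
  set Vstar := a.2.1 with hVstar_def
  set Pstar := a.2.2 with hPstar_def
  have hUc : Tendsto (fun s => U (φ s + 2)) atTop (nhds Ustar) :=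
    (continuous_fst.tendsto a).comp hXconv
  have hVc : Tendsto (fun s => V (φ s + 2)) atTop (nhds Vstar) :=
    ((continuous_fst.comp continuous_snd).tendsto a).comp hXconv
  have hPc : Tendsto (fun s => P (φ s + 2)) atTop (nhds Pstar) :=
    ((continuous_snd.comp continuous_snd).tendsto a).comp hXconv
  -- shifted sequences converge to the same limits
  have hdV0 : Tendsto (fun s => V (φ s + 2) - V (φ s + 1)) atTop (nhds 0) :=
    tendsto_zero_iff_norm_tendsto_zero.mpr (hεV.comp hφtop)
  have hdP0 : Tendsto (fun s => P (φ s + 2) - P (φ s + 1)) atTop (nhds 0) :=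
    tendsto_zero_iff_norm_tendsto_zero.mpr (hεP.comp hφtop)
  have hV1 : Tendsto (fun s => V (φ s + 1)) atTop (nhds Vstar) := by
    have heq : (fun s => V (φ s + 1))
        = fun s => V (φ s + 2) - (V (φ s + 2) - V (φ s + 1)) := by
      funext s; abel
    rw [heq]
    simpa using hVc.sub hdV0
  have hP1 : Tendsto (fun s => P (φ s + 1)) atTop (nhds Pstar) := by
    have heq : (fun s => P (φ s + 1))
        = fun s => P (φ s + 2) - (P (φ s + 2) - P (φ s + 1)) := by
      funext s; abel
    rw [heq]
    simpa using hPc.sub hdP0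
  refine ⟨fun s => φ s + 2, Ustar, Vstar, Pstar, ?_, ?_, hUc, hVc, hPc, ?_, ?_, ?_⟩
  · -- strict mono
    exact fun s t hst => by simpa using Nat.add_lt_add_right (hφ hst) 2
  · -- Ustar ∈ Kbox
    intro i
    have hconti : Continuous (fun x : EuclideanSpace ℝ (Fin M) => x i) :=
      (EuclideanSpace.proj i).continuous
    have hti : Tendsto (fun s => U (φ s + 2) i) atTop (nhds (Ustar i)) :=
      (hconti.tendsto _).comp hUc
    constructor
    · exact ge_of_tendsto hti (Eventually.of_forall fun s => (hUK _ i).1)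
    · exact le_of_tendsto hti (Eventually.of_forall fun s => (hUK _ i).2)
  · -- Vstar = mvec H Ustar
    have hres0 : Tendsto (fun s => V (φ s + 2) - mvec H (U (φ s + 2))) atTop (nhds 0) := by
      apply tendsto_zero_iff_norm_tendsto_zero.mpr
      have hle : ∀ s, ‖V (φ s + 2) - mvec H (U (φ s + 2))‖
          ≤ Lh/ρ * ‖V (φ s + 2) - V (φ s + 1)‖ := by
        intro s
        rw [div_mul_eq_mul_div, le_div_iff₀ hρ]
        have := hres (φ s)
        linarith
      apply squeeze_zero (fun s => norm_nonneg _) hle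
      simpa using (hεV.comp hφtop).const_mul (Lh/ρ)
    have h2 : Tendsto (fun s => V (φ s + 2) - mvec H (U (φ s + 2))) atTop
        (nhds (Vstar - mvec H Ustar)) := hVc.sub ((hmvc.tendsto _).comp hUc)
    have := tendsto_nhds_unique h2 hres0
    rw [sub_eq_zero] at this
    exact this
  · -- gradient condition
    have hgc : Continuous (gradient h) := by
      have hl : LipschitzWith (Real.toNNReal Lh) (gradient h) := by
        apply LipschitzWith.of_dist_le_mul
        intro x y
        rw [dist_eq_norm, dist_eq_norm, Real.coe_toNNReal _ hLh.le]
        exact hlip x y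
      exact hl.continuous
    have h1 : Tendsto (fun s => gradient h (V (φ s + 2)) + P (φ s + 2)) atTop
        (nhds (gradient h Vstar + Pstar)) := ((hgc.tendsto _).comp hVc).add hPc
    have h2 : (fun s => gradient h (V (φ s + 2)) + P (φ s + 2))
        = fun _ => (0 : EuclideanSpace ℝ (Fin N)) := by
      funext s
      have := hgrad (φ s + 1)
      rw [hidx] at this
      exact this
    rw [h2] at h1
    exact (tendsto_nhds_unique tendsto_const_nhds h1).symm
  · -- minimality in U
    intro U' hU'
    set Rfun : EuclideanSpace ℝ (Fin M) → EuclideanSpace ℝ (Fin N) → EuclideanSpace ℝ (Fin N) → ℝ :=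
      fun U'' V'' P'' => h V'' + ⟪P'', V'' - mvec H U''⟫ + ρ/2 * ‖V'' - mvec H U''‖^2
      with hRfun_def
    have hRcont : ∀ (Useq : ℕ → EuclideanSpace ℝ (Fin M))
        (Vseq Pseq : ℕ → EuclideanSpace ℝ (Fin N)) (U₀ : EuclideanSpace ℝ (Fin M))
        (V₀ P₀ : EuclideanSpace ℝ (Fin N)),
        Tendsto Useq atTop (nhds U₀) → Tendsto Vseq atTop (nhds V₀) →
        Tendsto Pseq atTop (nhds P₀) →
        Tendsto (fun s => Rfun (Useq s) (Vseq s) (Pseq s)) atTop (nhds (Rfun U₀ V₀ P₀)) := by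
      intro Useq Vseq Pseq U₀ V₀ P₀ hU hV hP
      have hsub : Tendsto (fun s => Vseq s - mvec H (Useq s)) atTop (nhds (V₀ - mvec H U₀)) :=
        hV.sub ((hmvc.tendsto _).comp hU)
      have h1 : Tendsto (fun s => h (Vseq s)) atTop (nhds (h V₀)) :=
        (hdiff.continuous.tendsto _).comp hV
      have h2 : Tendsto (fun s => ⟪Pseq s, Vseq s - mvec H (Useq s)⟫) atTop
          (nhds ⟪P₀, V₀ - mvec H U₀⟫) := hP.inner hsub
      have h3 : Tendsto (fun s => ‖Vseq s - mvec H (Useq s)‖^2) atTop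
          (nhds (‖V₀ - mvec H U₀‖^2)) := (hsub.norm).pow 2
      exact (h1.add h2).add (h3.const_mul (ρ/2))
    have hB : Tendsto (fun s => f U' + Rfun U' (V (φ s + 1)) (P (φ s + 1))
        - Rfun (U (φ s + 2)) (V (φ s + 1)) (P (φ s + 1))) atTop
        (nhds (f U' + Rfun U' Vstar Pstar - Rfun Ustar Vstar Pstar)) := by
      apply Tendsto.sub
      · exact (tendsto_const_nhds).add
          (hRcont (fun _ => U') _ _ U' Vstar Pstar tendsto_const_nhds hV1 hP1)
      · exact hRcont _ _ _ Ustar Vstar Pstar hUc hV1 hP1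
    have hfB : ∀ s, f (U (φ s + 2)) ≤ f U' + Rfun U' (V (φ s + 1)) (P (φ s + 1))
        - Rfun (U (φ s + 2)) (V (φ s + 1)) (P (φ s + 1)) := by
      intro s
      have hm := hUmin (φ s + 1) U' hU'
      rw [hidx] at hm
      simp only [lagr] at hm
      simp only [hRfun_def]
      linarith
    have hflim : f Ustar ≤ f U' + Rfun U' Vstar Pstar - Rfun Ustar Vstar Pstar := by
      by_contra hcon
      push_neg at hcon
      obtain ⟨y, hy1, hy2⟩ := exists_between hcon
      have hev1 : ∀ᶠ s in atTop, y < f (U (φ s + 2)) :=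
        hUc.eventually (hlsc Ustar y hy2)
      have hev2 : ∀ᶠ s in atTop, (f U' + Rfun U' (V (φ s + 1)) (P (φ s + 1))
          - Rfun (U (φ s + 2)) (V (φ s + 1)) (P (φ s + 1))) < y :=
        hB.eventually_lt_const hy1
      obtain ⟨s, hs1, hs2⟩ := (hev1.and hev2).exists
      exact absurd (lt_of_le_of_lt (hfB s) hs2) (not_lt.mpr hs1.le)
    simp only [lagr]
    simp only [hRfun_def] at hflim
    linarith
end
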